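/- Let a, b ≥ 0 be real numbers, let N ≥ 1 be a natural number with e²·a·b < 4N² (e = exp 1), and set q = e²ab/(4N²). With j_l(z) = z^l / (2^{l+1} · l!) · ∫_{-1}^{1} cos(z t) · (1 − t²)^l dt denoting the Poisson integral representation of the spherical Bessel function of the first kind, the truncation residual satisfies | ∑_{l=N+1}^∞ (2l+1)·j_l(a)·j_l(b) | ≤ q^{N+1}·( 2q/(1−q)² + (2N+3)/(1−q) ). -/

import Mathlib

/-!
Bounding `|cos(zt)(1 - t²)^l| ≤ 1` in the Poisson integral gives `|j_l(z)| ≤ |z|^l / (2^l l!)`,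
and `l^l ≤ l! e^l` turns this into `|j_l(a) j_l(b)| ≤ q^l` for every `l ≥ N`. The residual is
therefore dominated by the tail `∑_{l > N} (2l+1) q^l`, whose value is read off the geometric
series and its derivative.
-/

open Real
open scoped Nat

/-- Poisson integral representation of the spherical Bessel function of the first kind. -/
noncomputable def sphericalBessel (l : ℕ) (z : ℝ) : ℝ :=
  z ^ l / (2 ^ (l + 1) * l.factorial) *
    ∫ t in (-1 : ℝ)..1, Real.cos (z * t) * (1 - t ^ 2) ^ l

lemma abs_integral_cos_mul_one_sub_sq_pow_le_two (z : ℝ) (l : ℕ) :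
    |∫ t in (-1 : ℝ)..1, cos (z * t) * (1 - t ^ 2) ^ l| ≤ 2 := by
  have hbound : ∀ t ∈ Set.uIoc (-1 : ℝ) 1, ‖cos (z * t) * (1 - t ^ 2) ^ l‖ ≤ 1 := by
    intro t ht
    rw [Set.uIoc_of_le (by norm_num)] at ht
    have h0 : 0 ≤ 1 - t ^ 2 := by nlinarith [ht.1, ht.2]
    have h1 : 1 - t ^ 2 ≤ 1 := by nlinarith
    rw [norm_mul, norm_pow, Real.norm_of_nonneg h0]
    exact mul_le_one₀ (abs_cos_le_one _) (by positivity) (pow_le_one₀ h0 h1)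
  have h := intervalIntegral.norm_integral_le_of_norm_le_const hbound
  norm_num at h
  exact h

lemma abs_sphericalBessel_le (l : ℕ) (z : ℝ) :
    |sphericalBessel l z| ≤ |z| ^ l / (2 ^ l * l !) := by
  have hden : 0 < (2 : ℝ) ^ (l + 1) * l ! := by positivity
  rw [sphericalBessel, abs_mul, abs_div, abs_pow, abs_of_pos hden]
  calc |z| ^ l / (2 ^ (l + 1) * l !) * |∫ t in (-1 : ℝ)..1, cos (z * t) * (1 - t ^ 2) ^ l|
      ≤ |z| ^ l / (2 ^ (l + 1) * l !) * 2 := by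
        gcongr; exact abs_integral_cos_mul_one_sub_sq_pow_le_two z l
    _ = |z| ^ l / (2 ^ l * l !) := by rw [pow_succ]; field_simp

lemma pow_le_factorial_mul_exp_one_pow {N l : ℕ} (hNl : N ≤ l) :
    (N : ℝ) ^ l ≤ l ! * exp 1 ^ l := by
  have hl : (l : ℝ) ^ l / l ! ≤ exp 1 ^ l := by
    simpa [← Real.exp_nat_mul] using Real.pow_div_factorial_le_exp (l : ℝ) (Nat.cast_nonneg l) l
  calc (N : ℝ) ^ l ≤ (l : ℝ) ^ l := by gcongr
    _ ≤ l ! * exp 1 ^ l := by rwa [div_le_iff₀' (by positivity)] at hl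

lemma abs_mul_sphericalBessel_le {N l : ℕ} (hN : 0 < N) (hNl : N ≤ l) (a b : ℝ) :
    |sphericalBessel l a * sphericalBessel l b| ≤ (exp 1 ^ 2 * |a * b| / (4 * N ^ 2)) ^ l := by
  have hfac : (N : ℝ) ^ l ≤ l ! * exp 1 ^ l := pow_le_factorial_mul_exp_one_pow hNl
  calc |sphericalBessel l a * sphericalBessel l b|
      ≤ |a| ^ l / (2 ^ l * l !) * (|b| ^ l / (2 ^ l * l !)) := by
        rw [abs_mul]
        exact mul_le_mul (abs_sphericalBessel_le l a) (abs_sphericalBessel_le l b)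
          (abs_nonneg _) (by positivity)
    _ = |a * b| ^ l * (exp 1 ^ l) ^ 2 / (4 ^ l * (l ! * exp 1 ^ l) ^ 2) := by
        rw [abs_mul, mul_pow, show (4 : ℝ) ^ l = 2 ^ l * 2 ^ l by rw [← mul_pow]; norm_num]
        field_simp
    _ ≤ |a * b| ^ l * (exp 1 ^ l) ^ 2 / (4 ^ l * ((N : ℝ) ^ l) ^ 2) := by
        gcongr
    _ = (exp 1 ^ 2 * |a * b| / (4 * N ^ 2)) ^ l := by
        rw [div_pow, mul_pow, mul_pow, ← pow_mul, ← pow_mul, ← pow_mul, ← pow_mul]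
        ring

lemma hasSum_two_mul_add_one_mul_geometric_tail {q : ℝ} (hq : |q| < 1) (N : ℕ) :
    HasSum (fun k : ℕ => (2 * ((N : ℝ) + 1 + k) + 1) * q ^ (N + 1 + k))
      (q ^ (N + 1) * (2 * q / (1 - q) ^ 2 + (2 * (N : ℝ) + 3) / (1 - q))) := by
  have hsum := (((hasSum_coe_mul_geometric_of_norm_lt_one (r := q) hq).mul_left 2).add
    ((hasSum_geometric_of_abs_lt_one hq).mul_left (2 * (N : ℝ) + 3))).mul_left (q ^ (N + 1))
  convert hsum using 1
  · rfl
  · funext k; rw [pow_add]; ring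
  · ring

theorem truncation_residual_bound_general (a b : ℝ) (ha : 0 ≤ a) (hb : 0 ≤ b)
    (N : ℕ) (h : Real.exp 1 ^ 2 * a * b < 4 * (N : ℝ) ^ 2)
    (q : ℝ) (hq : q = Real.exp 1 ^ 2 * a * b / (4 * (N : ℝ) ^ 2)) :
    |∑' k : ℕ, (2 * ((N : ℝ) + 1 + k) + 1) *
        sphericalBessel (N + 1 + k) a * sphericalBessel (N + 1 + k) b| ≤
      q ^ (N + 1) * (2 * q / (1 - q) ^ 2 + (2 * (N : ℝ) + 3) / (1 - q)) := by
  have hab : 0 ≤ exp 1 ^ 2 * a * b := by positivity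
  have hden : 0 < 4 * (N : ℝ) ^ 2 := hab.trans_lt h
  have hN : 0 < N := Nat.pos_of_ne_zero (by rintro rfl; norm_num at hden)
  have hq_abs : |q| < 1 := by
    rw [hq, abs_of_nonneg (div_nonneg hab hden.le), div_lt_one hden]; exact h
  have hq_eq : q = exp 1 ^ 2 * |a * b| / (4 * N ^ 2) := by
    rw [hq, abs_of_nonneg (mul_nonneg ha hb), mul_assoc]
  rw [← Real.norm_eq_abs]
  refine tsum_of_norm_bounded (hasSum_two_mul_add_one_mul_geometric_tail hq_abs N) fun k => ?_
  rw [Real.norm_eq_abs, mul_assoc, abs_mul, abs_of_nonneg (by positivity), hq_eq]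
  gcongr
  exact abs_mul_sphericalBessel_le hN (by omega) a b

/-- Concrete form of the paper's Theorem 4.1: for `a, b ≥ 0`, `N ≥ 1` with
`e²ab < 4N²` and `q = e²ab/(4N²)`, the truncation residual satisfies
`|∑_{l=N+1}^∞ (2l+1) j_l(a) j_l(b)| ≤ q^{N+1}(2q/(1-q)^2 + (2N+3)/(1-q))`
(the sum over `l ≥ N+1` is written via `l = N+1+k`). -/
theorem truncation_residual_bound (a b : ℝ) (ha : 0 ≤ a) (hb : 0 ≤ b)
    (N : ℕ) (hN : 1 ≤ N) (h : Real.exp 1 ^ 2 * a * b < 4 * (N : ℝ) ^ 2)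
    (q : ℝ) (hq : q = Real.exp 1 ^ 2 * a * b / (4 * (N : ℝ) ^ 2)) :
    |∑' k : ℕ, (2 * ((N : ℝ) + 1 + k) + 1) *
        sphericalBessel (N + 1 + k) a * sphericalBessel (N + 1 + k) b| ≤
      q ^ (N + 1) * (2 * q / (1 - q) ^ 2 + (2 * (N : ℝ) + 3) / (1 - q)) :=
  truncation_residual_bound_general a b ha hb N h q hq
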